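/- Suppose f₀(x) ≤ v₁|x|^{−β} with β > 1, and let a = (1+β)/(2β), so βa = (β+1)/2 > 1. If for an index set A^c ⊆ {1,…,n} every i ∈ A^c satisfies min_{1≤j≤m}|X_i − μ_j| ≥ σ^{1−a} for a given σ ∈ (0,1], then Σ_{i∈A^c} log(Σ_{j=1}^m (α_j/σ) f₀((X_i−μ_j)/σ)) ≤ |A^c| (log v₁ + (1/2)(β−1) log σ). -/

import Mathlib

/-!
Each observation in `Ac` is at distance at least `σ^{1-a}` from every location, so after
rescaling by `σ` it lies at distance at least `σ^{-a}` and the tail bound gives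
`f₀ ≤ v₁ σ^{aβ} = v₁ σ^{(β+1)/2}`. The factor `1/σ` of the scaled kernel lowers this to
`v₁ σ^{(β-1)/2}`, a bound that survives averaging over the mixing weights; taking logarithms
and summing over `Ac` gives the claim.
-/

open Finset Real

section WeightedAverage

variable {ι : Type*} {s : Finset ι} {w g : ι → ℝ}

theorem sum_mul_le_of_sum_eq_one (hw : ∀ i ∈ s, 0 ≤ w i) (hw₁ : ∑ i ∈ s, w i = 1) {B : ℝ}
    (hg : ∀ i ∈ s, g i ≤ B) : ∑ i ∈ s, w i * g i ≤ B :=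
  calc ∑ i ∈ s, w i * g i ≤ ∑ i ∈ s, w i * B :=
        sum_le_sum fun i hi => mul_le_mul_of_nonneg_left (hg i hi) (hw i hi)
    _ = B := by rw [← sum_mul, hw₁, one_mul]

theorem sum_mul_pos_of_sum_eq_one (hw : ∀ i ∈ s, 0 ≤ w i) (hw₁ : ∑ i ∈ s, w i = 1)
    (hg : ∀ i ∈ s, 0 < g i) : 0 < ∑ i ∈ s, w i * g i := by
  obtain ⟨i, hi, hwi⟩ : ∃ i ∈ s, 0 < w i := by
    by_contra! h
    have : ∑ i ∈ s, w i = 0 := sum_eq_zero fun i hi => le_antisymm (h i hi) (hw i hi)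
    simp [hw₁] at this
  exact sum_pos' (fun j hj => mul_nonneg (hw j hj) (hg j hj).le)
    ⟨i, hi, mul_pos hwi (hg i hi)⟩

end WeightedAverage

theorem le_mul_rpow_neg_of_le_abs {f : ℝ → ℝ} {v β r x : ℝ}
    (hbd : ∀ x : ℝ, x ≠ 0 → f x ≤ v * |x| ^ (-β)) (hv : 0 ≤ v) (hβ : 0 ≤ β) (hr : 0 < r)
    (hx : r ≤ |x|) : f x ≤ v * r ^ (-β) := by
  have hx0 : x ≠ 0 := abs_pos.mp (hr.trans_le hx)
  calc f x ≤ v * |x| ^ (-β) := hbd x hx0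
    _ ≤ v * r ^ (-β) :=
        mul_le_mul_of_nonneg_left (rpow_le_rpow_of_nonpos hr hx (neg_nonpos.mpr hβ)) hv

theorem scaled_le_mul_rpow_of_le_abs {f : ℝ → ℝ} {v β σ x : ℝ}
    (hbd : ∀ x : ℝ, x ≠ 0 → f x ≤ v * |x| ^ (-β)) (hv : 0 ≤ v) (hβ : 0 < β) (hσ : 0 < σ)
    (hx : σ ^ (1 - (1 + β) / (2 * β)) ≤ |x|) :
    f (x / σ) / σ ≤ v * σ ^ ((β - 1) / 2) := by
  have hscaled : σ ^ (-((1 + β) / (2 * β))) ≤ |x / σ| := by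
    rwa [abs_div, abs_of_pos hσ, le_div_iff₀ hσ, ← rpow_add_one hσ.ne', neg_add_eq_sub]
  have hf := le_mul_rpow_neg_of_le_abs hbd hv hβ.le (rpow_pos_of_pos hσ _) hscaled
  rw [← rpow_mul hσ.le, show -((1 + β) / (2 * β)) * -β = (β - 1) / 2 + 1 by field_simp; ring,
    rpow_add_one hσ.ne', ← mul_assoc] at hf
  exact (div_le_iff₀ hσ).mpr hf

theorem loglik_tail_bound_general (n m : ℕ) (X : Fin n → ℝ) (f₀ : ℝ → ℝ)
    (v₁ β : ℝ) (hv₁ : 0 < v₁) (hβ : 1 < β)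
    (hf0 : ∀ x, 0 < f₀ x)
    (hbd : ∀ x : ℝ, x ≠ 0 → f₀ x ≤ v₁ * |x| ^ (-β))
    (α t : Fin m → ℝ) (hα : ∀ j, 0 ≤ α j) (hs : ∑ j, α j = 1)
    (σ : ℝ) (hσ0 : 0 < σ)
    (Ac : Finset (Fin n))
    (hAc : ∀ i ∈ Ac, ∀ j, σ ^ (1 - (1 + β) / (2 * β)) ≤ |X i - t j|) :
    ∑ i ∈ Ac, Real.log (∑ j, (α j / σ) * f₀ ((X i - t j) / σ)) ≤
      Ac.card * (Real.log v₁ + (1 / 2) * (β - 1) * Real.log σ) := by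
  have hlog_bound : Real.log (v₁ * σ ^ ((β - 1) / 2)) =
      Real.log v₁ + (1 / 2) * (β - 1) * Real.log σ := by
    rw [Real.log_mul hv₁.ne' (rpow_pos_of_pos hσ0 _).ne', Real.log_rpow hσ0]
    ring
  rw [← hlog_bound, ← nsmul_eq_mul]
  refine sum_le_card_nsmul _ _ _ fun i hi => ?_
  simp_rw [div_mul_eq_mul_div, mul_div_assoc]
  exact Real.log_le_log
    (sum_mul_pos_of_sum_eq_one (fun j _ => hα j) hs fun j _ => div_pos (hf0 _) hσ0)
    (sum_mul_le_of_sum_eq_one (fun j _ => hα j) hs fun j _ =>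
      scaled_le_mul_rpow_of_le_abs hbd hv₁.le (by linarith) hσ0 (hAc i hi j))

/-- Tail part of the log-likelihood: if `f₀(x) ≤ v₁|x|^{−β}` with `β > 1`,
`a = (1+β)/(2β)`, and all observations indexed by `Ac` are at distance at least
`σ^{1−a}` from every support point, then
`Σ_{i∈Ac} log(Σ_j (α_j/σ) f₀((X_i−μ_j)/σ)) ≤ |Ac|(log v₁ + (1/2)(β−1) log σ)`. -/
theorem loglik_tail_bound (n m : ℕ) (hm : 0 < m) (X : Fin n → ℝ) (f₀ : ℝ → ℝ)
    (v₁ β : ℝ) (hv₁ : 0 < v₁) (hβ : 1 < β)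
    (hf0 : ∀ x, 0 < f₀ x)
    (hbd : ∀ x : ℝ, x ≠ 0 → f₀ x ≤ v₁ * |x| ^ (-β))
    (α t : Fin m → ℝ) (hα : ∀ j, 0 ≤ α j) (hs : ∑ j, α j = 1)
    (σ : ℝ) (hσ0 : 0 < σ) (hσ1 : σ ≤ 1)
    (Ac : Finset (Fin n))
    (hAc : ∀ i ∈ Ac, ∀ j, σ ^ (1 - (1 + β) / (2 * β)) ≤ |X i - t j|) :
    ∑ i ∈ Ac, Real.log (∑ j, (α j / σ) * f₀ ((X i - t j) / σ)) ≤
      Ac.card * (Real.log v₁ + (1 / 2) * (β - 1) * Real.log σ) :=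
  loglik_tail_bound_general n m X f₀ v₁ β hv₁ hβ hf0 hbd α t hα hs σ hσ0 Ac hAc
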